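/- Let A be an automaton over Fin n with synchronizing sequence A_0 = A, A_1, A_2, …. Then: (1) for every i ∈ ℕ, two states p, q of A belong to the same state of A_i if and only if π*(w, p) = π*(w, q) for every word w of length i; (2) A is synchronizing if and only if there is j ∈ ℕ such that A_j has exactly one state, and the minimal such j equals the minimal level at which A is synchronizing. -/
import Mathlib


/-- The one-sided shift map on `(Fin n)^ℕ`: `(σ x) i = x (i+1)`. -/
def shiftMap (n : ℕ) : (ℕ → Fin n) → (ℕ → Fin n) := fun x i => x (i + 1)

/-- `b` has orbit length exactly `N` under `f`: `N` is the least `L ≥ 1` with `f^[L] b = b`. -/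
def HasOrbitLen {β : Type*} (f : β → β) (b : β) (N : ℕ) : Prop :=
  IsLeast {L : ℕ | 0 < L ∧ f^[L] b = b} N

/-- An automorphism of the one-sided shift: a homeomorphism commuting with the shift. -/
def IsShiftAut (n : ℕ) (φ : (ℕ → Fin n) ≃ₜ (ℕ → Fin n)) : Prop :=
  ⇑φ ∘ shiftMap n = shiftMap n ∘ ⇑φ

/-- `φ` has finite order. -/
def FiniteOrderAut (n : ℕ) (φ : (ℕ → Fin n) ≃ₜ (ℕ → Fin n)) : Prop :=
  ∃ m : ℕ, 0 < m ∧ (⇑φ)^[m] = id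

/-- Extension of the transition function of an automaton to words (letters read in order). -/
def transStar {n : ℕ} {Q : Type*} (π : Fin n → Q → Q) : List (Fin n) → Q → Q
  | [], q => q
  | x :: w, q => transStar π w (π x q)

/-- The automaton `(Q, π)` is synchronizing at level `k` with synchronizing map `s`. -/
def SyncAtLevelWith {n : ℕ} {Q : Type*} (π : Fin n → Q → Q) (k : ℕ)
    (s : List (Fin n) → Q) : Prop :=
  ∀ w : List (Fin n), w.length = k → ∀ q : Q, transStar π w q = s w

/-- The synchronizing map `s` at level `k` is surjective (the automaton is core). -/
def CoreAt {n : ℕ} {Q : Type*} (s : List (Fin n) → Q) (k : ℕ) : Prop :=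
  ∀ q : Q, ∃ w : List (Fin n), w.length = k ∧ s w = q

/-- An automorphism of the underlying digraph of the automaton `(Q, π)`. -/
structure DigraphAut {Q : Type*} (n : ℕ) (π : Fin n → Q → Q) where
  α : Q ≃ Q
  lab : Q → Equiv.Perm (Fin n)
  compat : ∀ (x : Fin n) (q : Q), π (lab q x) (α q) = α (π x q)

/-- Action of a digraph automorphism on the edge set `Q × Fin n`. -/
def edgeMap {Q : Type*} {n : ℕ} {π : Fin n → Q → Q} (Φ : DigraphAut n π) :
    Q × Fin n → Q × Fin n :=
  fun e => (Φ.α e.1, Φ.lab e.1 e.2)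

/-- The output word map `Λ` of a digraph automorphism. -/
def outWord {Q : Type*} {n : ℕ} (π : Fin n → Q → Q) (lab : Q → Equiv.Perm (Fin n)) :
    List (Fin n) → Q → List (Fin n)
  | [], _ => []
  | x :: w, q => lab q x :: outWord π lab w (π x q)

/-- Action of a digraph automorphism on based circuits: `(q, w) ↦ (α q, Λ(w, q))`. -/
def circMap {Q : Type*} {n : ℕ} {π : Fin n → Q → Q} (Φ : DigraphAut n π) :
    Q × List (Fin n) → Q × List (Fin n) :=
  fun c => (Φ.α c.1, outWord π Φ.lab c.2 c.1)

/-- `(q, w)` is a based circuit: `w` nonempty and `π*(w, q) = q`. -/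
def IsBasedCircuit {Q : Type*} {n : ℕ} (π : Fin n → Q → Q) (c : Q × List (Fin n)) : Prop :=
  c.2 ≠ [] ∧ transStar π c.2 c.1 = c.1

/-- The sliding block code induced by an automaton synchronizing at level `k`
with synchronizing map `s` and digraph automorphism with labelling `lab`:
`(F x) i = lab q_i (x i)` where `q_i = s [x(i+k), x(i+k-1), …, x(i+1)]`. -/
def inducedMap {Q : Type*} {n : ℕ} (k : ℕ) (s : List (Fin n) → Q)
    (lab : Q → Equiv.Perm (Fin n)) : (ℕ → Fin n) → (ℕ → Fin n) :=
  fun x i => lab (s (List.ofFn fun j : Fin k => x (i + k - (j : ℕ)))) (x i)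

/-- `(A, Φ)` (with `A` synchronizing and core) is a support of the shift automorphism `φ`. -/
def IsSupport {Q : Type*} (n : ℕ) (π : Fin n → Q → Q) (Φ : DigraphAut n π)
    (φ : (ℕ → Fin n) ≃ₜ (ℕ → Fin n)) : Prop :=
  ∃ (k : ℕ) (s : List (Fin n) → Q), SyncAtLevelWith π k s ∧ CoreAt s k ∧
    inducedMap k s Φ.lab = ⇑φ

/-- The permutation automorphism of the shift induced by a permutation of `Fin n`. -/
def permAutMap {n : ℕ} (ρ : Equiv.Perm (Fin n)) : (ℕ → Fin n) → (ℕ → Fin n) :=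
  fun x i => ρ (x i)

/-- `t` is heavy for `(A, Φ, N)` with divisibility constant `b`. -/
def Heavy {Q : Type*} {n : ℕ} (π : Fin n → Q → Q) (Φ : DigraphAut n π)
    (N b : ℕ) (t : Q) : Prop :=
  b ∣ N ∧ b ≠ N ∧ (∀ r : ℕ, HasOrbitLen (⇑Φ.α) t r → r ∣ b) ∧
  ∀ (q : Q) (x : Fin n), π x q = t →
    ∀ L : ℕ, HasOrbitLen (edgeMap Φ) (q, x) L → Nat.lcm L b = N

/-- A (state set, transition function) automaton over `Fin n`, bundled. -/
structure Autom (n : ℕ) where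
  St : Type
  tr : Fin n → St → St

/-- The synchronizing sequence of an automaton: each term is the quotient of the
previous one identifying states with identical transition functions. -/
def syncSeq {n : ℕ} (A : Autom n) : ℕ → Autom n
  | 0 => A
  | i + 1 =>
    { St := Quot (fun p q : (syncSeq A i).St =>
        ∀ x : Fin n, (syncSeq A i).tr x p = (syncSeq A i).tr x q),
      tr := fun x => Quot.lift (fun p => Quot.mk _ ((syncSeq A i).tr x p))
        (fun p q h => congrArg (Quot.mk _) (h x)) }

/-- The class of a state of `A` in the `i`-th term of the synchronizing sequence. -/
def syncCls {n : ℕ} (A : Autom n) : (i : ℕ) → A.St → (syncSeq A i).St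
  | 0, q => q
  | i + 1, q => Quot.mk _ (syncCls A i q)

lemma syncCls_tr {n : ℕ} (A : Autom n) :
    ∀ (i : ℕ) (x : Fin n) (q : A.St),
      (syncSeq A i).tr x (syncCls A i q) = syncCls A i (A.tr x q)
  | 0, _, _ => rfl
  | i + 1, x, q => congrArg (Quot.mk _) (syncCls_tr A i x q)

lemma syncCls_surj {n : ℕ} (A : Autom n) :
    ∀ i : ℕ, Function.Surjective (syncCls A i)
  | 0 => fun q => ⟨q, rfl⟩
  | i + 1 => fun u => by
      induction u using Quot.ind with
      | _ v =>
        obtain ⟨q, hq⟩ := syncCls_surj A i v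
        exact ⟨q, congrArg (Quot.mk _) hq⟩

lemma syncCls_eq_iff {n : ℕ} (A : Autom n) :
    ∀ (i : ℕ) (p q : A.St),
      syncCls A i p = syncCls A i q ↔
        ∀ w : List (Fin n), w.length = i → transStar A.tr w p = transStar A.tr w q := by
  intro i
  induction i with
  | zero =>
    intro p q
    constructor
    · rintro h w hw
      have : w = [] := List.length_eq_zero_iff.mp hw
      subst this; exact h
    · intro h
      exact h [] rfl
  | succ i ih =>
    intro p q
    have key : syncCls A (i+1) p = syncCls A (i+1) q ↔
        ∀ x : Fin n, (syncSeq A i).tr x (syncCls A i p) = (syncSeq A i).tr x (syncCls A i q) := by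
      constructor
      · intro h
        have h' := Quot.eq.mp h
        -- the relation is an equivalence, so EqvGen collapses
        have : ∀ a b : (syncSeq A i).St, Relation.EqvGen
            (fun p q : (syncSeq A i).St => ∀ x : Fin n, (syncSeq A i).tr x p = (syncSeq A i).tr x q) a b →
            ∀ x : Fin n, (syncSeq A i).tr x a = (syncSeq A i).tr x b := by
          intro a b hab
          induction hab with
          | rel _ _ h => exact h
          | refl _ => intro x; rfl
          | symm _ _ _ ih => intro x; exact (ih x).symm
          | trans _ _ _ _ _ ih1 ih2 => intro x; exact (ih1 x).trans (ih2 x)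
        exact this _ _ h'
      · intro h
        exact Quot.sound h
    rw [key]
    constructor
    · intro h w hw
      match w, hw with
      | x :: w, hw =>
        have hw' : w.length = i := by simpa using hw
        have := h x
        rw [syncCls_tr, syncCls_tr] at this
        exact (ih (A.tr x p) (A.tr x q)).mp this w hw'
    · intro h x
      rw [syncCls_tr, syncCls_tr]
      exact (ih (A.tr x p) (A.tr x q)).mpr (fun w hw => h (x :: w) (by simpa using hw))

lemma sync_set_eq {n : ℕ} (Q : Type) [Nonempty Q] (π : Fin n → Q → Q) (i : ℕ) :
    (∀ u v : (syncSeq ⟨Q, π⟩ i).St, u = v) ↔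
      ∃ s : List (Fin n) → Q, SyncAtLevelWith π i s := by
  constructor
  · intro h
    obtain ⟨q₀⟩ := ‹Nonempty Q›
    refine ⟨fun w => transStar π w q₀, fun w hw q => ?_⟩
    have := (syncCls_eq_iff (⟨Q, π⟩ : Autom n) i q q₀).mp (h _ _)
    exact this w hw
  · rintro ⟨s, hs⟩ u v
    obtain ⟨p, rfl⟩ := syncCls_surj (⟨Q, π⟩ : Autom n) i u
    obtain ⟨q, rfl⟩ := syncCls_surj (⟨Q, π⟩ : Autom n) i v
    exact (syncCls_eq_iff (⟨Q, π⟩ : Autom n) i p q).mpr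
      (fun w hw => (hs w hw p).trans (hs w hw q).symm)

theorem synchronizing_sequence_characterisation (n : ℕ)
    (Q : Type) [Fintype Q] [Nonempty Q] (π : Fin n → Q → Q) :
    (∀ (i : ℕ) (p q : Q),
      syncCls ⟨Q, π⟩ i p = syncCls ⟨Q, π⟩ i q ↔
        ∀ w : List (Fin n), w.length = i → transStar π w p = transStar π w q) ∧
    ((∃ (k : ℕ) (s : List (Fin n) → Q), SyncAtLevelWith π k s) ↔
      ∃ j : ℕ, ∀ u v : (syncSeq ⟨Q, π⟩ j).St, u = v) ∧
    (∀ j : ℕ,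
      IsLeast {i : ℕ | ∀ u v : (syncSeq ⟨Q, π⟩ i).St, u = v} j ↔
        IsLeast {k : ℕ | ∃ s : List (Fin n) → Q, SyncAtLevelWith π k s} j) := by
  refine ⟨fun i p q => syncCls_eq_iff (⟨Q, π⟩ : Autom n) i p q, ?_, ?_⟩
  · constructor
    · rintro ⟨k, s, hs⟩
      exact ⟨k, (sync_set_eq Q π k).mpr ⟨s, hs⟩⟩
    · rintro ⟨j, hj⟩
      obtain ⟨s, hs⟩ := (sync_set_eq Q π j).mp hj
      exact ⟨j, s, hs⟩
  · intro j
    have : {i : ℕ | ∀ u v : (syncSeq ⟨Q, π⟩ i).St, u = v} =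
        {k : ℕ | ∃ s : List (Fin n) → Q, SyncAtLevelWith π k s} := by
      ext i; exact sync_set_eq Q π i
    rw [this]
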